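/- arXiv:2503.10835 — 3 statements merged into one kernel-verified Lean document; each statement's English description precedes it below -/
import Mathlib

section
/- Let σ ∈ PGL₂(k) act on rational functions by conjugation, φ^σ = σ⁻¹ ∘ φ ∘ σ. If ψ = φ^σ, then I_ψ = (I_φ)^σ and J_ψ = (J_φ)^σ, where for a binary form f, f^σ(x,y) = f(ax+by, cx+ey) with σ = (a b; c e). Conversely, if I_ψ = (I_φ)^σ and J_ψ = (J_φ)^σ then ψ = φ^σ. -/
open MvPolynomial

/-- Substitution by the matrix `(a b; c e)`: `f^σ(x,y) = f(ax+by, cx+ey)`. -/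
noncomputable def conjSub {k : Type*} [CommSemiring k] (a b c e : k) :
    MvPolynomial (Fin 2) k →ₐ[k] MvPolynomial (Fin 2) k :=
  aeval ![C a * X 0 + C b * X 1, C c * X 0 + C e * X 1]

section Aux

variable {k : Type*} [CommRing k] (a b c e : k)

lemma conjSub_X0 : conjSub a b c e (X 0) = C a * X 0 + C b * X 1 := by
  simp [conjSub]

lemma conjSub_X1 : conjSub a b c e (X 1) = C c * X 0 + C e * X 1 := by
  simp [conjSub]

lemma pderiv_conjSub (f : MvPolynomial (Fin 2) k) :
    (pderiv 0 (conjSub a b c e f) =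
      C a * conjSub a b c e (pderiv 0 f) + C c * conjSub a b c e (pderiv 1 f)) ∧
    (pderiv 1 (conjSub a b c e f) =
      C b * conjSub a b c e (pderiv 0 f) + C e * conjSub a b c e (pderiv 1 f)) := by
  induction f using MvPolynomial.induction_on with
  | C r => simp [conjSub]
  | add p q hp hq =>
      obtain ⟨hp0, hp1⟩ := hp
      obtain ⟨hq0, hq1⟩ := hq
      constructor <;> simp only [map_add, hp0, hp1, hq0, hq1] <;> ring
  | mul_X p j ih =>
      obtain ⟨ih0, ih1⟩ := ih
      fin_cases j <;>
      constructor <;>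
      · simp only [map_mul, conjSub_X0, conjSub_X1, pderiv_mul, ih0, ih1,
          Derivation.leibniz, smul_eq_mul, map_add, pderiv_X_self, pderiv_X_of_ne,
          Fin.mk_one, Fin.zero_eta]
        simp [pderiv_X, Pi.single_apply, conjSub_X0, conjSub_X1]
        try ring

/-- coefficient of the Euler operator term -/
lemma coeff_X_mul_pderiv (i : Fin 2) (h : MvPolynomial (Fin 2) k) (m : Fin 2 →₀ ℕ) :
    coeff m (X i * pderiv i h) = (m i : k) * coeff m h := by
  induction h using MvPolynomial.induction_on' with
  | add p q hp hq => simp only [map_add, mul_add, coeff_add, hp, hq]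
  | monomial s r =>
      rw [pderiv_monomial, X, monomial_mul, coeff_monomial, coeff_monomial]
      by_cases hsi : s i = 0
      · simp only [hsi, Nat.cast_zero, mul_zero, ite_self]
        split_ifs with hsm
        · subst hsm; simp [hsi]
        · simp
      · have h2 : Finsupp.single i 1 + (s - Finsupp.single i 1) = s := by
          ext j
          by_cases hj : i = j
          · subst hj
            simp only [Finsupp.add_apply, Finsupp.tsub_apply, Finsupp.single_eq_same]
            omega
          · simp [Finsupp.add_apply, Finsupp.tsub_apply, Finsupp.single_apply, hj]
        rw [h2]
        split_ifs with hsm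
        · subst hsm; push_cast; ring
        · simp

end Aux

section Field

variable {k : Type*} [Field k]

lemma prime_X0 : Prime (X 0 : MvPolynomial (Fin 2) k) := by
  rw [← MulEquiv.prime_iff (MvPolynomial.finSuccEquiv k 1).toRingEquiv.toMulEquiv]
  have : (MvPolynomial.finSuccEquiv k 1).toRingEquiv.toMulEquiv (X 0)
      = Polynomial.X := MvPolynomial.finSuccEquiv_X_zero
  rw [this]
  exact Polynomial.prime_X

lemma euler_zero [CharZero k] (h : MvPolynomial (Fin 2) k)
    (H : C (2 : k) * h + X 0 * pderiv 0 h + X 1 * pderiv 1 h = 0) : h = 0 := by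
  ext m
  have hm := congrArg (coeff m) H
  simp only [coeff_add, coeff_C_mul, coeff_X_mul_pderiv, coeff_zero] at hm
  have hcast : ((2 + m 0 + m 1 : ℕ) : k) ≠ 0 := Nat.cast_ne_zero.2 (by omega)
  have : ((2 + m 0 + m 1 : ℕ) : k) * coeff m h = 0 := by push_cast; linear_combination hm
  simpa [coeff_zero] using (mul_eq_zero.1 this).resolve_left hcast

end Field

/-- `ψ = φ^σ` (i.e. `g₀ = e f₀^σ - b f₁^σ`, `g₁ = -c f₀^σ + a f₁^σ`) if and only if
`I_ψ = I_φ^σ` and `J_ψ = J_φ^σ`. -/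
theorem stmt4 {k : Type*} [Field k] [IsAlgClosed k] [CharZero k] (d : ℕ) (hd : 2 ≤ d)
    (a b c e : k) (hdet : a * e - b * c = 1)
    (f₀ f₁ g₀ g₁ : MvPolynomial (Fin 2) k)
    (hf₀ : f₀.IsHomogeneous d) (hf₁ : f₁.IsHomogeneous d)
    (hg₀ : g₀.IsHomogeneous d) (hg₁ : g₁.IsHomogeneous d)
    (hcf : IsRelPrime f₀ f₁) (hcg : IsRelPrime g₀ g₁) :
    (g₀ = C e * conjSub a b c e f₀ - C b * conjSub a b c e f₁ ∧
       g₁ = -(C c) * conjSub a b c e f₀ + C a * conjSub a b c e f₁) ↔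
      (X 1 * g₀ - X 0 * g₁ = conjSub a b c e (X 1 * f₀ - X 0 * f₁) ∧
       pderiv 0 g₀ + pderiv 1 g₁ = conjSub a b c e (pderiv 0 f₀ + pderiv 1 f₁)) := by
  have hdetC : C a * C e - C b * C c = (1 : MvPolynomial (Fin 2) k) := by
    rw [← C_mul, ← C_mul, ← C_sub, hdet, C_1]
  set G₀ : MvPolynomial (Fin 2) k :=
    C e * conjSub a b c e f₀ - C b * conjSub a b c e f₁ with hG₀
  set G₁ : MvPolynomial (Fin 2) k :=
    -(C c) * conjSub a b c e f₀ + C a * conjSub a b c e f₁ with hG₁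
  have fwdI : X 1 * G₀ - X 0 * G₁ = conjSub a b c e (X 1 * f₀ - X 0 * f₁) := by
    rw [map_sub, map_mul, map_mul, conjSub_X0, conjSub_X1, hG₀, hG₁]
    ring
  have fwdJ : pderiv 0 G₀ + pderiv 1 G₁
      = conjSub a b c e (pderiv 0 f₀ + pderiv 1 f₁) := by
    rw [hG₀, hG₁, map_add]
    have p00 := (pderiv_conjSub a b c e f₀).1
    have p01 := (pderiv_conjSub a b c e f₀).2
    have p10 := (pderiv_conjSub a b c e f₁).1
    have p11 := (pderiv_conjSub a b c e f₁).2
    have hc : (-(C c) : MvPolynomial (Fin 2) k) = C (-c) := by simp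
    rw [hc, map_sub, map_add, pderiv_C_mul, pderiv_C_mul, pderiv_C_mul, pderiv_C_mul,
      p00, p01, p10, p11]
    simp only [map_neg]
    linear_combination (conjSub a b c e (pderiv 0 f₀) + conjSub a b c e (pderiv 1 f₁)) * hdetC
  constructor
  · rintro ⟨h0, h1⟩
    subst h0; subst h1
    exact ⟨fwdI, fwdJ⟩
  · rintro ⟨hI, hJ⟩
    have hI' : X 1 * (g₀ - G₀) = X 0 * (g₁ - G₁) := by
      linear_combination hI - fwdI
    have hJ' : pderiv 0 (g₀ - G₀) + pderiv 1 (g₁ - G₁) = 0 := by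
      have h1 : pderiv 0 (g₀ - G₀) = pderiv 0 g₀ - pderiv 0 G₀ := map_sub _ _ _
      have h2 : pderiv 1 (g₁ - G₁) = pderiv 1 g₁ - pderiv 1 G₁ := map_sub _ _ _
      rw [h1, h2]
      linear_combination hJ - fwdJ
    -- X 0 divides g₀ - G₀
    have hdvd : (X 0 : MvPolynomial (Fin 2) k) ∣ X 1 * (g₀ - G₀) := ⟨g₁ - G₁, hI'⟩
    have hX01 : ¬ (X 0 : MvPolynomial (Fin 2) k) ∣ X 1 := by
      rw [X_dvd_X]; decide
    obtain ⟨h, hh⟩ := (prime_X0.2.2 _ _ hdvd).resolve_left hX01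
    have hq : g₁ - G₁ = X 1 * h := by
      have hX0 : (X 0 : MvPolynomial (Fin 2) k) ≠ 0 := X_ne_zero 0
      apply mul_left_cancel₀ hX0
      rw [← hI', hh]; ring
    have hzero : h = 0 := by
      apply euler_zero
      have e0 : pderiv 0 (g₀ - G₀) = h + X 0 * pderiv 0 h := by
        rw [hh, pderiv_mul, pderiv_X_self]; ring
      have e1 : pderiv 1 (g₁ - G₁) = h + X 1 * pderiv 1 h := by
        rw [hq, pderiv_mul, pderiv_X_self]; ring
      rw [e0, e1] at hJ'
      have : C (2 : k) = (2 : MvPolynomial (Fin 2) k) := by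
        rw [show (2:k) = ((2:ℕ):k) by norm_num, C_eq_coe_nat]; norm_num
      rw [this]
      linear_combination hJ'
    rw [hzero, mul_zero] at hh hq
    constructor
    · exact sub_eq_zero.mp hh
    · exact sub_eq_zero.mp hq
end

section
/- Every element of the automorphism group of a degree 3 rational function has order at most 4. Specifically, if σ(z) = ζ·z with ζ a primitive n-th root of unity commutes with a degree 3 rational function φ, then n ≤ 4. -/
open Polynomial

lemma coeff_comp_CmulX {k : Type*} [CommRing k] (F : Polynomial k) (ζ : k) (i : ℕ) :
    (F.comp (C ζ * X)).coeff i = ζ ^ i * F.coeff i := by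
  induction F using Polynomial.induction_on' with
  | add p q hp hq => simp [add_comp, hp, hq, mul_add]
  | monomial j a =>
    simp only [monomial_comp, mul_pow, ← C_pow, coeff_C_mul, coeff_X_pow, coeff_monomial]
    by_cases h : i = j
    · subst h; simp [mul_comm]
    · rw [if_neg h, if_neg (fun hh : j = i => h hh.symm)]; simp

/-- If `σ(z) = ζ z` with `ζ` a primitive `n`-th root of unity commutes with a degree 3
rational function `φ = F/G` (i.e. `F(ζz) G(z) = ζ F(z) G(ζz)`), then `n ≤ 4`. -/
theorem stmt8 {k : Type*} [Field k] [IsAlgClosed k] [CharZero k]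
    (F G : Polynomial k) (hcop : IsCoprime F G)
    (hdeg : max F.natDegree G.natDegree = 3)
    (ζ : k) (n : ℕ) (hn : 0 < n) (hζ : IsPrimitiveRoot ζ n)
    (hcomm : F.comp (C ζ * X) * G = C ζ * (F * G.comp (C ζ * X))) :
    n ≤ 4 := by
  by_contra hlt
  push_neg at hlt
  have hn5 : 5 ≤ n := hlt
  have hζ0 : ζ ≠ 0 := hζ.ne_zero hn.ne'
  have hF0 : F ≠ 0 := by
    rintro rfl
    have := isCoprime_zero_left.mp hcop
    have hG1 : G.natDegree = 0 := natDegree_eq_zero_of_isUnit this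
    simp [hG1] at hdeg
  have hG0 : G ≠ 0 := by
    rintro rfl
    have := isCoprime_zero_right.mp hcop
    have hF1 : F.natDegree = 0 := natDegree_eq_zero_of_isUnit this
    simp [hF1] at hdeg
  set r₀ := F.natDegree with hr₀
  set r₁ := G.natDegree with hr₁
  have hr₀3 : r₀ ≤ 3 := hdeg ▸ le_max_left _ _
  have hr₁3 : r₁ ≤ 3 := hdeg ▸ le_max_right _ _
  -- F divides F.comp (C ζ * X)
  have hdvdF : F ∣ F.comp (C ζ * X) := by
    apply hcop.dvd_of_dvd_mul_right
    rw [hcomm]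
    exact ⟨C ζ * G.comp (C ζ * X), by ring⟩
  have hdvdG : G ∣ G.comp (C ζ * X) := by
    apply hcop.symm.dvd_of_dvd_mul_right
    have hdd : G ∣ C ζ * (F * G.comp (C ζ * X)) := by
      rw [← hcomm]; exact ⟨F.comp (C ζ * X), by ring⟩
    rcases hdd with ⟨t, ht⟩
    refine ⟨C ζ⁻¹ * t, mul_left_cancel₀ (C_ne_zero.mpr hζ0) ?_⟩
    rw [show C ζ * (G * (C ζ⁻¹ * t)) = C ζ * C ζ⁻¹ * (G * t) from by ring,
      ← C_mul, mul_inv_cancel₀ hζ0, C_1, one_mul, ← ht]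
    ring
  -- comp preserves natDegree
  have hdegζ : ∀ p : Polynomial k, (p.comp (C ζ * X)).natDegree = p.natDegree := by
    intro p
    rw [natDegree_comp]
    have : (C ζ * X).natDegree = 1 := by
      rw [natDegree_C_mul hζ0, natDegree_X]
    rw [this, mul_one]
  have hFζ0 : F.comp (C ζ * X) ≠ 0 := by
    intro h
    have := coeff_comp_CmulX F ζ r₀
    rw [h, coeff_zero] at this
    have := this.symm
    rw [mul_eq_zero] at this
    rcases this with h1 | h2
    · exact pow_ne_zero _ hζ0 h1
    · exact leadingCoeff_ne_zero.mpr hF0 h2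
  have hGζ0 : G.comp (C ζ * X) ≠ 0 := by
    intro h
    have := coeff_comp_CmulX G ζ r₁
    rw [h, coeff_zero] at this
    have := this.symm
    rw [mul_eq_zero] at this
    rcases this with h1 | h2
    · exact pow_ne_zero _ hζ0 h1
    · exact leadingCoeff_ne_zero.mpr hG0 h2
  -- extract constants c, d
  have getc : ∀ p : Polynomial k, p ≠ 0 → p.comp (C ζ * X) ≠ 0 → p ∣ p.comp (C ζ * X) →
      ∃ c : k, p.comp (C ζ * X) = C c * p := by
    intro p hp hpζ ⟨q, hq⟩
    have hq0 : q ≠ 0 := by rintro rfl; simp at hq; exact hpζ hq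
    have : p.natDegree = p.natDegree + q.natDegree := by
      conv_lhs => rw [← hdegζ p, hq, natDegree_mul hp hq0]
    have hqd : q.natDegree = 0 := by omega
    refine ⟨q.coeff 0, ?_⟩
    rw [hq, mul_comm]
    congr 1
    exact eq_C_of_natDegree_eq_zero hqd
  obtain ⟨c, hc⟩ := getc F hF0 hFζ0 hdvdF
  obtain ⟨d, hd⟩ := getc G hG0 hGζ0 hdvdG
  have hcoefF : ∀ i, F.coeff i ≠ 0 → ζ ^ i = c := by
    intro i hi
    have := coeff_comp_CmulX F ζ i
    rw [hc, coeff_C_mul] at this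
    exact mul_right_cancel₀ hi this.symm
  have hcoefG : ∀ i, G.coeff i ≠ 0 → ζ ^ i = d := by
    intro i hi
    have := coeff_comp_CmulX G ζ i
    rw [hd, coeff_C_mul] at this
    exact mul_right_cancel₀ hi this.symm
  -- c = ζ * d
  have hcd : c = ζ * d := by
    have h1 : C c * F * G = C ζ * (F * (C d * G)) := by
      rw [← hc, ← hd]; exact hcomm
    have h2 : (C c - C ζ * C d) * (F * G) = 0 := by
      linear_combination h1
    have hFG : F * G ≠ 0 := mul_ne_zero hF0 hG0
    have := (mul_eq_zero.mp h2).resolve_right hFG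
    rw [← C_mul, ← C_sub] at this
    have := C_eq_zero.mp this
    rw [← C_mul, ← C_sub] at *
    exact sub_eq_zero.mp this
  have hcF : ζ ^ r₀ = c := hcoefF r₀ (leadingCoeff_ne_zero.mpr hF0)
  have hdG : ζ ^ r₁ = d := hcoefG r₁ (leadingCoeff_ne_zero.mpr hG0)
  have hpow : ζ ^ r₀ = ζ ^ (r₁ + 1) := by
    rw [hcF, hcd, ← hdG, pow_succ, mul_comm]
  have hr : r₀ = r₁ + 1 := hζ.pow_inj (by omega) (by omega) hpow
  have hr03 : r₀ = 3 := by omega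
  have hr12 : r₁ = 2 := by omega
  -- constant coefficients vanish
  have hF00 : F.coeff 0 = 0 := by
    by_contra h
    have h1 : ζ ^ 0 = c := hcoefF 0 h
    have h2 := hζ.pow_inj (show 0 < n by omega) (by omega) (h1.trans hcF.symm)
    omega
  have hG00 : G.coeff 0 = 0 := by
    by_contra h
    have h1 : ζ ^ 0 = d := hcoefG 0 h
    have h2 := hζ.pow_inj (show 0 < n by omega) (by omega) (h1.trans hdG.symm)
    omega
  obtain ⟨a, b, hab⟩ := hcop
  have := congrArg (Polynomial.eval 0) hab
  simp only [eval_add, eval_mul, eval_one, ← coeff_zero_eq_eval_zero, hF00, hG00,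
    mul_zero, add_zero] at this
  exact one_ne_zero this.symm
end

section
/- Let φ(z) = (a z² + b)/(z(c z² + d)) with c ≠ 0 be a degree 3 rational function such that τ(z) = 1/z commutes with φ (i.e., φ(1/z) = 1/φ(z)). Then ab = cd and a² + b² = c² + d², and consequently (b,d) = (c,a) or (b,d) = (-c,-a); hence φ(z) = (t z² + 1)/(z³ + t z) or φ(z) = (t z² - 1)/(z³ - t z) for t = a/c. -/
open Polynomial

lemma aux11 {k : Type*} [Field k] (c d : k) (hc : c ≠ 0) :
    ¬ IsCoprime (C c * X ^ 2 + C d) (X * (C c * X ^ 2 + C d)) := by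
  intro h
  have hu : IsUnit (C c * X ^ 2 + C d) :=
    h.isUnit_of_dvd' dvd_rfl (dvd_mul_left _ _)
  have hd : (C c * X ^ 2 + C d : k[X]).natDegree = 2 := by
    have h2 : (C c * X ^ 2 + C d : k[X]) = C c * X ^ 2 + C 0 * X + C d := by simp
    rw [h2, natDegree_quadratic hc]
  have := natDegree_eq_zero_of_isUnit hu
  omega

/-- If `φ(z) = (a z² + b)/(z(c z² + d))` with `c ≠ 0` commutes with `τ(z) = 1/z`
(i.e. `(b z² + a)(a z² + b) = (c z² + d)(d z² + c)` after cross-multiplication),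
then `ab = cd`, `a² + b² = c² + d²`, `(b,d) = (c,a)` or `(b,d) = (-c,-a)`, and hence
`φ(z) = (t z² + 1)/(z³ + t z)` or `φ(z) = (t z² - 1)/(z³ - t z)` with `t = a/c`. -/
theorem stmt11 {k : Type*} [Field k] [CharZero k] (a b c d : k) (hc : c ≠ 0)
    (hcop : IsCoprime (C a * X ^ 2 + C b) (X * (C c * X ^ 2 + C d)))
    (hcomm : (C b * X ^ 2 + C a) * (C a * X ^ 2 + C b)
        = (C c * X ^ 2 + C d) * (C d * X ^ 2 + C c)) :
    a * b = c * d ∧ a ^ 2 + b ^ 2 = c ^ 2 + d ^ 2 ∧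
      ((b = c ∧ d = a) ∨ (b = -c ∧ d = -a)) ∧
      ((C a * X ^ 2 + C b) * (X ^ 3 + C (a / c) * X)
          = (C (a / c) * X ^ 2 + 1) * (X * (C c * X ^ 2 + C d)) ∨
        (C a * X ^ 2 + C b) * (X ^ 3 - C (a / c) * X)
          = (C (a / c) * X ^ 2 - 1) * (X * (C c * X ^ 2 + C d))) := by
  have h0 := congrArg (eval 0) hcomm
  have h1 := congrArg (eval 1) hcomm
  simp only [eval_mul, eval_add, eval_pow, eval_C, eval_X] at h0 h1
  have hab : a * b = c * d := by linear_combination h0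
  have hsq : a ^ 2 + b ^ 2 = c ^ 2 + d ^ 2 := by linear_combination h1 - 2 * hab
  have hs : a + b = c + d ∨ a + b = -(c + d) := by
    have h2 : (a + b - (c + d)) * (a + b + (c + d)) = 0 := by
      linear_combination hsq + 2 * hab
    rcases mul_eq_zero.mp h2 with h | h
    · left; linear_combination h
    · right; linear_combination h
  have hm : a - b = c - d ∨ a - b = -(c - d) := by
    have h2 : (a - b - (c - d)) * (a - b + (c - d)) = 0 := by
      linear_combination hsq - 2 * hab
    rcases mul_eq_zero.mp h2 with h | h
    · left; linear_combination h
    · right; linear_combination h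
  have hac : (C (a / c) : k[X]) * C c = C a := by
    rw [← C_mul, div_mul_cancel₀ _ hc]
  have key : (b = c ∧ d = a) ∨ (b = -c ∧ d = -a) := by
    rcases hs with hs | hs <;> rcases hm with hm | hm
    · exfalso
      have ha : a = c := by linear_combination (hs + hm) / 2
      have hb : b = d := by linear_combination (hs - hm) / 2
      rw [ha, hb] at hcop
      exact aux11 c d hc hcop
    · left
      exact ⟨by linear_combination (hs - hm) / 2, by linear_combination -(hs + hm) / 2⟩
    · right
      exact ⟨by linear_combination (hs - hm) / 2, by linear_combination (hs + hm) / 2⟩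
    · exfalso
      have ha : a = -c := by linear_combination (hs + hm) / 2
      have hb : b = -d := by linear_combination (hs - hm) / 2
      rw [ha, hb] at hcop
      have h3 : (C (-c) * X ^ 2 + C (-d) : k[X]) = -(C c * X ^ 2 + C d) := by
        simp; ring
      rw [h3] at hcop
      exact aux11 c d hc ((IsCoprime.neg_left_iff _ _).mp hcop)
  refine ⟨hab, hsq, key, ?_⟩
  rcases key with ⟨hb, hd⟩ | ⟨hb, hd⟩
  · left
    rw [hb, hd]
    linear_combination (X - X ^ 5 : k[X]) * hac
  · right
    rw [hb, hd]
    simp only [map_neg]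
    linear_combination (X - X ^ 5 : k[X]) * hac
end
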